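/- arXiv:1508.05621 — 3 statements merged into one kernel-verified Lean document; each statement's English description precedes it below -/
import Mathlib

section
/- Let S be a commutative ring containing ℚ and let R = S[T]/(T^r) for some r ≥ 1, viewed as a graded S-algebra with T in degree 1. Then the inclusion S → R and the projection R → S (killing T) induce mutually inverse quasi-isomorphisms on de Rham complexes: the canonical projection Ω^•_{R/ℚ} → Ω^•_{S/ℚ} is a quasi-isomorphism. In particular, H^n of the relative complex ker(Ω^•_{R/ℚ} → Ω^•_{S/ℚ}) vanishes for all n. -/
set_option synthInstance.maxHeartbeats 1000000
set_option maxHeartbeats 4000000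

/-- The truncated polynomial ring `S[T]/(T^r)`. -/
abbrev TruncPoly (S : Type*) [CommRing S] (r : ℕ) : Type _ :=
  Polynomial S ⧸ (Ideal.span {Polynomial.X ^ r} : Ideal (Polynomial S))

/-- The projection `S[T]/(T^r) → S` killing `T` (evaluation at `0`). -/
noncomputable def truncProj (S : Type*) [CommRing S] (r : ℕ) (hr : 1 ≤ r) :
    TruncPoly S r →+* S :=
  Ideal.Quotient.lift _ (Polynomial.evalRingHom 0) (by
    intro a ha
    rw [Ideal.mem_span_singleton'] at ha
    obtain ⟨b, rfl⟩ := ha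
    simp [Polynomial.eval_mul, zero_pow (Nat.one_le_iff_ne_zero.mp hr)])


section Words

variable {A : Type} [CommRing A] [Algebra ℚ A]

/-- Words in the de Rham algebra. -/
inductive S6Word : ExteriorAlgebra A (Ω[A⁄ℚ]) → Prop
  | one : S6Word 1
  | algCons (a : A) {w : ExteriorAlgebra A (Ω[A⁄ℚ])} : S6Word w →
      S6Word (algebraMap A (ExteriorAlgebra A (Ω[A⁄ℚ])) a * w)
  | iotaCons (a : A) {w : ExteriorAlgebra A (Ω[A⁄ℚ])} : S6Word w →
      S6Word (ExteriorAlgebra.ι A (KaehlerDifferential.D ℚ A a) * w)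

/-- Sums of (negated) words. -/
def S6Span (x : ExteriorAlgebra A (Ω[A⁄ℚ])) : Prop :=
  ∃ l : List (ExteriorAlgebra A (Ω[A⁄ℚ])),
    (∀ z ∈ l, S6Word z ∨ S6Word (-z)) ∧ x = l.sum


theorem s6_list_sum_mul_left {B : Type*} [Ring B] (c : B) (l : List B) :
    c * l.sum = (l.map (fun z => c * z)).sum := by
  induction l with
  | nil => simp
  | cons a l ih => simp [mul_add, ih]

theorem S6Span.zero : S6Span (0 : ExteriorAlgebra A (Ω[A⁄ℚ])) := ⟨[], by simp, by simp⟩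

theorem S6Span.add {x y : ExteriorAlgebra A (Ω[A⁄ℚ])} (hx : S6Span x) (hy : S6Span y) :
    S6Span (x + y) := by
  obtain ⟨l1, h1, rfl⟩ := hx
  obtain ⟨l2, h2, rfl⟩ := hy
  exact ⟨l1 ++ l2, by intro z hz; rcases List.mem_append.1 hz with h | h; exacts [h1 z h, h2 z h],
    by simp⟩

theorem S6Span.neg {x : ExteriorAlgebra A (Ω[A⁄ℚ])} (hx : S6Span x) : S6Span (-x) := by
  obtain ⟨l, h, rfl⟩ := hx
  refine ⟨l.map (fun z => -z), ?_, ?_⟩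
  · intro z hz
    obtain ⟨w, hw, rfl⟩ := List.mem_map.1 hz
    rcases h w hw with h' | h'
    · exact Or.inr (by simpa using h')
    · exact Or.inl h'
  · induction l with
    | nil => simp
    | cons a l ih =>
      simp only [List.sum_cons, List.map_cons, neg_add]
      rw [ih (fun w hw => h w (by simp [hw]))]

theorem S6Span.word {x : ExteriorAlgebra A (Ω[A⁄ℚ])} (hx : S6Word x) : S6Span x :=
  ⟨[x], by intro z hz; simp_all, by simp⟩

theorem S6Span.mul_alg (a : A) {x : ExteriorAlgebra A (Ω[A⁄ℚ])} (hx : S6Span x) :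
    S6Span (algebraMap A (ExteriorAlgebra A (Ω[A⁄ℚ])) a * x) := by
  obtain ⟨l, h, rfl⟩ := hx
  refine ⟨l.map (fun z => algebraMap A (ExteriorAlgebra A (Ω[A⁄ℚ])) a * z), ?_, ?_⟩
  · intro z hz
    obtain ⟨w, hw, rfl⟩ := List.mem_map.1 hz
    rcases h w hw with h' | h'
    · exact Or.inl (S6Word.algCons a h')
    · exact Or.inr (by rw [← mul_neg]; exact S6Word.algCons a h')
  · exact s6_list_sum_mul_left _ _

theorem S6Span.mul_iota (a : A) {x : ExteriorAlgebra A (Ω[A⁄ℚ])} (hx : S6Span x) :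
    S6Span (ExteriorAlgebra.ι A (KaehlerDifferential.D ℚ A a) * x) := by
  obtain ⟨l, h, rfl⟩ := hx
  refine ⟨l.map (fun z => ExteriorAlgebra.ι A (KaehlerDifferential.D ℚ A a) * z), ?_, ?_⟩
  · intro z hz
    obtain ⟨w, hw, rfl⟩ := List.mem_map.1 hz
    rcases h w hw with h' | h'
    · exact Or.inl (S6Word.iotaCons a h')
    · exact Or.inr (by rw [← mul_neg]; exact S6Word.iotaCons a h')
  · exact s6_list_sum_mul_left _ _

theorem S6Span.mul_word {x y : ExteriorAlgebra A (Ω[A⁄ℚ])} (hx : S6Word x) (hy : S6Span y) :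
    S6Span (x * y) := by
  induction hx with
  | one => simpa using hy
  | algCons a _ ih => rw [mul_assoc]; exact S6Span.mul_alg a ih
  | iotaCons a _ ih => rw [mul_assoc]; exact S6Span.mul_iota a ih

theorem S6Span.mul {x y : ExteriorAlgebra A (Ω[A⁄ℚ])} (hx : S6Span x) (hy : S6Span y) :
    S6Span (x * y) := by
  obtain ⟨l, h, rfl⟩ := hx
  induction l with
  | nil => simpa using S6Span.zero
  | cons z l ih =>
    rw [List.sum_cons, add_mul]
    refine S6Span.add ?_ (ih (fun w hw => h w (by simp [hw])))
    rcases h z (by simp) with h' | h'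
    · exact S6Span.mul_word h' hy
    · have := (S6Span.mul_word h' hy).neg
      rwa [neg_mul, neg_neg] at this

theorem S6Span.iota (m : Ω[A⁄ℚ]) : S6Span (ExteriorAlgebra.ι A m) := by
  have hm : m ∈ Submodule.span A (Set.range (KaehlerDifferential.D ℚ A)) := by
    rw [KaehlerDifferential.span_range_derivation]; trivial
  induction hm using Submodule.span_induction with
  | mem z hz =>
    obtain ⟨a, rfl⟩ := hz
    have : ExteriorAlgebra.ι A (KaehlerDifferential.D ℚ A a) =
        ExteriorAlgebra.ι A (KaehlerDifferential.D ℚ A a) * 1 := by rw [mul_one]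
    rw [this]
    exact S6Span.word (S6Word.iotaCons a S6Word.one)
  | zero => rw [map_zero]; exact S6Span.zero
  | add x y _ _ hx hy => rw [map_add]; exact hx.add hy
  | smul a x _ hx =>
    rw [map_smul, Algebra.smul_def]
    exact S6Span.mul_alg a hx

theorem S6Span.top (x : ExteriorAlgebra A (Ω[A⁄ℚ])) : S6Span x := by
  induction x using ExteriorAlgebra.induction with
  | algebraMap a =>
    have : algebraMap A (ExteriorAlgebra A (Ω[A⁄ℚ])) a =
        algebraMap A (ExteriorAlgebra A (Ω[A⁄ℚ])) a * 1 := by rw [mul_one]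
    rw [this]; exact S6Span.word (S6Word.algCons a S6Word.one)
  | ι m => exact S6Span.iota m
  | mul a b ha hb => exact ha.mul hb
  | add a b ha hb => exact ha.add hb

/-- Two additive maps agreeing on words agree everywhere. -/
theorem s6_addHom_eq {N : Type*} [AddCommGroup N]
    (f g : ExteriorAlgebra A (Ω[A⁄ℚ]) →+ N)
    (h : ∀ w, S6Word w → f w = g w) (x : ExteriorAlgebra A (Ω[A⁄ℚ])) : f x = g x := by
  obtain ⟨l, hl, rfl⟩ := S6Span.top x
  induction l with
  | nil => simp
  | cons z l ih =>
    rw [List.sum_cons, map_add, map_add, ih (fun w hw => hl w (by simp [hw]))]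
    congr 1
    rcases hl z (by simp) with h' | h'
    · exact h z h'
    · have := h _ h'
      rw [map_neg, map_neg, neg_inj] at this
      exact this

end Words

section RStructure

open Polynomial

variable {S : Type} [CommRing S] [Algebra ℚ S] {r : ℕ}
variable {R : Type} [CommRing R] [Algebra ℚ R]

/-- The canonical section `S → R`. -/
noncomputable def s6sig (eR : R ≃+* TruncPoly S r) : S →+* R :=
  (eR.symm : TruncPoly S r →+* R).comp
    ((Ideal.Quotient.mk (Ideal.span {Polynomial.X ^ r} : Ideal (Polynomial S))).comp Polynomial.C)

theorem s6sig_apply (eR : R ≃+* TruncPoly S r) (s : S) :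
    s6sig eR s = eR.symm (Ideal.Quotient.mk _ (Polynomial.C s)) := rfl

/-- The Euler vector field `T ∂/∂T` on the truncated polynomial ring. -/
noncomputable def s6ETfun (hr : 1 ≤ r) : TruncPoly S r → TruncPoly S r := fun x =>
  Quotient.liftOn' x
    (fun f => Ideal.Quotient.mk _ (Polynomial.X * Polynomial.derivative f))
    (by
      intro f g hfg
      rw [Submodule.quotientRel_def] at hfg
      rw [Ideal.mem_span_singleton'] at hfg
      obtain ⟨b, hb⟩ := hfg
      apply Ideal.Quotient.eq.2
      rw [Ideal.mem_span_singleton]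
      have : X * derivative f - X * derivative g = X * derivative (f - g) := by
        rw [derivative_sub, mul_sub]
      rw [this, ← hb, derivative_mul, derivative_X_pow]
      have hX : (X : S[X]) * X ^ (r - 1) = X ^ r := by
        rw [← pow_succ', Nat.sub_add_cancel hr]
      have h2 : X * (b * (C (r : S) * X ^ (r - 1))) = C (r : S) * b * X ^ r := by
        rw [← hX]; ring
      rw [mul_add, h2]
      exact dvd_add (Dvd.intro_left (X * derivative b) (by ring)) (Dvd.intro_left _ rfl))

theorem s6ETfun_mk (hr : 1 ≤ r) (f : Polynomial S) :
    s6ETfun hr (Ideal.Quotient.mk _ f) =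
      Ideal.Quotient.mk _ (Polynomial.X * Polynomial.derivative f) := rfl

/-- The Euler vector field on `R`. -/
noncomputable def s6Efun (hr : 1 ≤ r) (eR : R ≃+* TruncPoly S r) : R → R := fun a =>
  eR.symm (s6ETfun hr (eR a))

theorem s6Efun_eq (hr : 1 ≤ r) (eR : R ≃+* TruncPoly S r) (a : R) (f : Polynomial S)
    (hf : eR a = Ideal.Quotient.mk _ f) :
    s6Efun hr eR a = eR.symm (Ideal.Quotient.mk _ (Polynomial.X * Polynomial.derivative f)) := by
  rw [s6Efun, hf, s6ETfun_mk]

theorem s6_exists_poly (eR : R ≃+* TruncPoly S r) (a : R) :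
    ∃ f : Polynomial S, eR a = Ideal.Quotient.mk _ f := by
  obtain ⟨f, hf⟩ := Ideal.Quotient.mk_surjective (eR a)
  exact ⟨f, hf.symm⟩

theorem s6Efun_add (hr : 1 ≤ r) (eR : R ≃+* TruncPoly S r) (a b : R) :
    s6Efun hr eR (a + b) = s6Efun hr eR a + s6Efun hr eR b := by
  obtain ⟨f, hf⟩ := s6_exists_poly eR a
  obtain ⟨g, hg⟩ := s6_exists_poly eR b
  have hab : eR (a + b) = Ideal.Quotient.mk _ (f + g) := by rw [map_add, hf, hg, map_add]
  rw [s6Efun_eq hr eR _ _ hab, s6Efun_eq hr eR _ _ hf, s6Efun_eq hr eR _ _ hg,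
    derivative_add, mul_add, map_add, map_add]

theorem s6Efun_mul (hr : 1 ≤ r) (eR : R ≃+* TruncPoly S r) (a b : R) :
    s6Efun hr eR (a * b) = a * s6Efun hr eR b + b * s6Efun hr eR a := by
  obtain ⟨f, hf⟩ := s6_exists_poly eR a
  obtain ⟨g, hg⟩ := s6_exists_poly eR b
  have hab : eR (a * b) = Ideal.Quotient.mk _ (f * g) := by rw [map_mul, hf, hg, map_mul]
  rw [s6Efun_eq hr eR _ _ hab, s6Efun_eq hr eR _ _ hf, s6Efun_eq hr eR _ _ hg]
  have : X * derivative (f * g) = f * (X * derivative g) + g * (X * derivative f) := by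
    rw [derivative_mul]; ring
  have ha' : eR.symm (Ideal.Quotient.mk _ f) = a := by rw [← hf, eR.symm_apply_apply]
  have hb' : eR.symm (Ideal.Quotient.mk _ g) = b := by rw [← hg, eR.symm_apply_apply]
  rw [this]
  simp only [map_add, map_mul]
  rw [ha', hb']

theorem s6Efun_one (hr : 1 ≤ r) (eR : R ≃+* TruncPoly S r) : s6Efun hr eR 1 = 0 := by
  have h1 : eR (1 : R) = Ideal.Quotient.mk _ (1 : Polynomial S) := by
    rw [map_one, map_one]
  rw [s6Efun_eq hr eR _ _ h1, derivative_one, mul_zero, map_zero, map_zero]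

/-- The Euler derivation on `R`. -/
noncomputable def s6E (hr : 1 ≤ r) (eR : R ≃+* TruncPoly S r) : Derivation ℚ R R where
  toLinearMap := (AddMonoidHom.mk' (s6Efun hr eR) (s6Efun_add hr eR)).toRatLinearMap
  map_one_eq_zero' := s6Efun_one hr eR
  leibniz' := fun a b => by
    show s6Efun hr eR (a * b) = a • s6Efun hr eR b + b • s6Efun hr eR a
    rw [smul_eq_mul, smul_eq_mul]
    exact s6Efun_mul hr eR a b

theorem s6E_apply (hr : 1 ≤ r) (eR : R ≃+* TruncPoly S r) (a : R) :
    s6E hr eR a = s6Efun hr eR a := rfl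

theorem s6E_sig (hr : 1 ≤ r) (eR : R ≃+* TruncPoly S r) (s : S) :
    s6E hr eR (s6sig eR s) = 0 := by
  have h : eR (s6sig eR s) = Ideal.Quotient.mk _ (Polynomial.C s) := by
    rw [s6sig_apply, eR.apply_symm_apply]
  rw [s6E_apply, s6Efun_eq hr eR _ _ h, derivative_C, mul_zero, map_zero, map_zero]

theorem s6_pi_sig (hr : 1 ≤ r) (eR : R ≃+* TruncPoly S r) (s : S) :
    (truncProj S r hr).comp (eR : R →+* TruncPoly S r) (s6sig eR s) = s := by
  show truncProj S r hr (eR (s6sig eR s)) = s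
  have h : eR (s6sig eR s) = Ideal.Quotient.mk _ (Polynomial.C s) := by
    rw [s6sig_apply, eR.apply_symm_apply]
  rw [h, truncProj, Ideal.Quotient.lift_mk]
  simp

theorem s6_pi_E (hr : 1 ≤ r) (eR : R ≃+* TruncPoly S r) (a : R) :
    (truncProj S r hr).comp (eR : R →+* TruncPoly S r) (s6E hr eR a) = 0 := by
  obtain ⟨f, hf⟩ := s6_exists_poly eR a
  show truncProj S r hr (eR (s6E hr eR a)) = 0
  rw [s6E_apply, s6Efun_eq hr eR _ _ hf, eR.apply_symm_apply, truncProj, Ideal.Quotient.lift_mk]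
  simp

end RStructure

section RDecomp

open Polynomial

variable {S : Type} [CommRing S] [Algebra ℚ S] {r : ℕ}
variable {R : Type} [CommRing R] [Algebra ℚ R]

/-- Eigenvector of the Euler derivation with positive integer eigenvalue. -/
def s6REig (hr : 1 ≤ r) (eR : R ≃+* TruncPoly S r) (b : R) : Prop :=
  ∃ n : ℕ, 1 ≤ n ∧ s6E hr eR b = n • b

theorem s6RDec (hr : 1 ≤ r) (eR : R ≃+* TruncPoly S r) (a : R) :
    ∃ l : List R, (∀ b ∈ l, s6REig hr eR b) ∧
      a = s6sig eR ((truncProj S r hr).comp (eR : R →+* TruncPoly S r) a) + l.sum := by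
  obtain ⟨f, hf⟩ := s6_exists_poly eR a
  have ha : a = eR.symm (Ideal.Quotient.mk _ f) := by rw [← hf, eR.symm_apply_apply]
  subst ha
  clear hf
  induction f using Polynomial.induction_on with
  | C s =>
    refine ⟨[], by simp, ?_⟩
    have h : (truncProj S r hr).comp (eR : R →+* TruncPoly S r)
        (eR.symm (Ideal.Quotient.mk _ (C s))) = s := by
      show truncProj S r hr (eR (eR.symm _)) = s
      rw [eR.apply_symm_apply, truncProj, Ideal.Quotient.lift_mk]
      simp
    rw [h, s6sig_apply, List.sum_nil, add_zero]
  | add f g ihf ihg =>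
    obtain ⟨lf, hlf, hf⟩ := ihf
    obtain ⟨lg, hlg, hg⟩ := ihg
    refine ⟨lf ++ lg, ?_, ?_⟩
    · intro b hb; rcases List.mem_append.1 hb with h | h; exacts [hlf b h, hlg b h]
    · rw [map_add, map_add, map_add, map_add, List.sum_append]
      calc eR.symm (Ideal.Quotient.mk _ f) + eR.symm (Ideal.Quotient.mk _ g)
          = (s6sig eR ((truncProj S r hr).comp (eR : R →+* TruncPoly S r)
              (eR.symm (Ideal.Quotient.mk _ f))) + lf.sum) +
            (s6sig eR ((truncProj S r hr).comp (eR : R →+* TruncPoly S r)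
              (eR.symm (Ideal.Quotient.mk _ g))) + lg.sum) := by rw [← hf, ← hg]
        _ = _ := by ring
  | monomial n s _ =>
    set b : R := eR.symm (Ideal.Quotient.mk _ (C s * X ^ (n + 1))) with hb
    refine ⟨[b], ?_, ?_⟩
    · intro c hc
      rw [List.mem_singleton] at hc
      subst hc
      refine ⟨n + 1, Nat.le_add_left 1 n, ?_⟩
      have heq : eR b = Ideal.Quotient.mk _ (C s * X ^ (n + 1)) := by
        rw [hb, eR.apply_symm_apply]
      rw [s6E_apply, s6Efun_eq hr eR _ _ heq]
      have hpoly : X * derivative (C s * X ^ (n + 1)) = (n + 1) • (C s * X ^ (n + 1)) := by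
        rw [derivative_C_mul, derivative_X_pow]
        rw [nsmul_eq_mul]
        push_cast
        rw [← C_eq_natCast]
        push_cast
        rw [C_add, C_1]
        ring
      rw [hpoly, map_nsmul, map_nsmul]
    · have h : (truncProj S r hr).comp (eR : R →+* TruncPoly S r) b = 0 := by
        show truncProj S r hr (eR b) = 0
        rw [hb, eR.apply_symm_apply, truncProj, Ideal.Quotient.lift_mk]
        simp [zero_pow (Nat.succ_ne_zero n)]
      rw [h, map_zero, List.sum_cons, List.sum_nil, add_zero, zero_add]

end RDecomp

section Contraction

variable {S : Type} [CommRing S] [Algebra ℚ S] {r : ℕ}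
variable {R : Type} [CommRing R] [Algebra ℚ R]

/-- Contraction with the Euler vector field. -/
noncomputable def s6cE (hr : 1 ≤ r) (eR : R ≃+* TruncPoly S r) :
    ExteriorAlgebra R (Ω[R⁄ℚ]) →ₗ[R] ExteriorAlgebra R (Ω[R⁄ℚ]) :=
  CliffordAlgebra.contractLeft ((s6E hr eR).liftKaehlerDifferential)

theorem s6cE_one (hr : 1 ≤ r) (eR : R ≃+* TruncPoly S r) :
    s6cE hr eR 1 = 0 := by
  unfold s6cE
  exact CliffordAlgebra.contractLeft_one (Q := (0 : QuadraticForm R (Ω[R⁄ℚ])))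
    (d := (s6E hr eR).liftKaehlerDifferential)

theorem s6cE_iota_mul (hr : 1 ≤ r) (eR : R ≃+* TruncPoly S r) (a : R)
    (x : ExteriorAlgebra R (Ω[R⁄ℚ])) :
    s6cE hr eR (ExteriorAlgebra.ι R (KaehlerDifferential.D ℚ R a) * x) =
      algebraMap R _ (s6E hr eR a) * x -
        ExteriorAlgebra.ι R (KaehlerDifferential.D ℚ R a) * s6cE hr eR x := by
  have h := CliffordAlgebra.contractLeft_ι_mul (Q := (0 : QuadraticForm R (Ω[R⁄ℚ])))
    (d := (s6E hr eR).liftKaehlerDifferential) (KaehlerDifferential.D ℚ R a) x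
  rw [Derivation.liftKaehlerDifferential_comp_D] at h
  rw [s6cE]
  rw [h, Algebra.smul_def]

theorem s6cE_alg_mul (hr : 1 ≤ r) (eR : R ≃+* TruncPoly S r) (a : R)
    (x : ExteriorAlgebra R (Ω[R⁄ℚ])) :
    s6cE hr eR (algebraMap R (ExteriorAlgebra R (Ω[R⁄ℚ])) a * x) =
      algebraMap R (ExteriorAlgebra R (Ω[R⁄ℚ])) a * s6cE hr eR x := by
  rw [← Algebra.smul_def, map_smul, Algebra.smul_def]

end Contraction

section Jmap

variable {S : Type} [CommRing S] [Algebra ℚ S] {r : ℕ}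
variable {R : Type} [CommRing R] [Algebra ℚ R]

/-- The lift `Ω^•_{S/ℚ} → Ω^•_{R/ℚ}` induced by the section `S → R`. -/
noncomputable def s6j (hr : 1 ≤ r) (eR : R ≃+* TruncPoly S r) :
    ExteriorAlgebra S (Ω[S⁄ℚ]) →+ ExteriorAlgebra R (Ω[R⁄ℚ]) :=
  letI : Algebra S R := (s6sig eR).toAlgebra
  haveI : IsScalarTower ℚ S R := IsScalarTower.of_algebraMap_eq' (Subsingleton.elim _ _)
  letI f : Ω[S⁄ℚ] →ₗ[S] ExteriorAlgebra R (Ω[R⁄ℚ]) :=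
    (LinearMap.restrictScalars S
        (ExteriorAlgebra.ι R : Ω[R⁄ℚ] →ₗ[R] ExteriorAlgebra R (Ω[R⁄ℚ]))).comp
      (KaehlerDifferential.map ℚ ℚ S R)
  (ExteriorAlgebra.lift S
    ⟨f, fun m => by
      show ExteriorAlgebra.ι R _ * ExteriorAlgebra.ι R _ = 0
      exact ExteriorAlgebra.ι_sq_zero _⟩).toLinearMap.toAddMonoidHom

theorem s6j_spec (hr : 1 ≤ r) (eR : R ≃+* TruncPoly S r) :
    s6j hr eR 1 = 1 ∧
    (∀ (s : S) (x : ExteriorAlgebra S (Ω[S⁄ℚ])),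
      s6j hr eR (algebraMap S (ExteriorAlgebra S (Ω[S⁄ℚ])) s * x) =
        algebraMap R (ExteriorAlgebra R (Ω[R⁄ℚ])) (s6sig eR s) * s6j hr eR x) ∧
    (∀ (s : S) (x : ExteriorAlgebra S (Ω[S⁄ℚ])),
      s6j hr eR (ExteriorAlgebra.ι S (KaehlerDifferential.D ℚ S s) * x) =
        ExteriorAlgebra.ι R (KaehlerDifferential.D ℚ R (s6sig eR s)) * s6j hr eR x) := by
  letI : Algebra S R := (s6sig eR).toAlgebra
  haveI : IsScalarTower ℚ S R := IsScalarTower.of_algebraMap_eq' (Subsingleton.elim _ _)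
  letI f : Ω[S⁄ℚ] →ₗ[S] ExteriorAlgebra R (Ω[R⁄ℚ]) :=
    (LinearMap.restrictScalars S
        (ExteriorAlgebra.ι R : Ω[R⁄ℚ] →ₗ[R] ExteriorAlgebra R (Ω[R⁄ℚ]))).comp
      (KaehlerDifferential.map ℚ ℚ S R)
  letI J : ExteriorAlgebra S (Ω[S⁄ℚ]) →ₐ[S] ExteriorAlgebra R (Ω[R⁄ℚ]) :=
    ExteriorAlgebra.lift S
      ⟨f, fun m => by
        show ExteriorAlgebra.ι R _ * ExteriorAlgebra.ι R _ = 0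
        exact ExteriorAlgebra.ι_sq_zero _⟩
  have hJ : ∀ x, s6j hr eR x = J x := fun x => rfl
  have halg : ∀ s : S, algebraMap S (ExteriorAlgebra R (Ω[R⁄ℚ])) s =
      algebraMap R (ExteriorAlgebra R (Ω[R⁄ℚ])) (s6sig eR s) := by
    intro s
    rw [IsScalarTower.algebraMap_apply S R (ExteriorAlgebra R (Ω[R⁄ℚ])),
      RingHom.algebraMap_toAlgebra]
  refine ⟨?_, ?_, ?_⟩
  · rw [hJ, map_one]
  · intro s x
    rw [hJ, hJ, map_mul, AlgHom.commutes, halg]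
  · intro s x
    rw [hJ, hJ, map_mul]
    congr 1
    show J (ExteriorAlgebra.ι S (KaehlerDifferential.D ℚ S s)) = _
    rw [ExteriorAlgebra.lift_ι_apply]
    show ExteriorAlgebra.ι R (KaehlerDifferential.map ℚ ℚ S R (KaehlerDifferential.D ℚ S s)) = _
    rw [KaehlerDifferential.map_D, RingHom.algebraMap_toAlgebra]

end Jmap

section PosL

variable {E : Type*} [AddCommGroup E]

/-- Sums of eigenvectors of `L` with positive natural eigenvalues. -/
def s6PosL (L : E →+ E) (x : E) : Prop :=
  ∃ l : List E, (∀ z ∈ l, ∃ n : ℕ, 1 ≤ n ∧ L z = n • z) ∧ x = l.sum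

theorem s6PosL.zero (L : E →+ E) : s6PosL L (0 : E) := ⟨[], by simp, by simp⟩

theorem s6PosL.add {L : E →+ E} {x y : E} (hx : s6PosL L x) (hy : s6PosL L y) :
    s6PosL L (x + y) := by
  obtain ⟨l1, h1, rfl⟩ := hx
  obtain ⟨l2, h2, rfl⟩ := hy
  exact ⟨l1 ++ l2, by
    intro z hz; rcases List.mem_append.1 hz with h | h; exacts [h1 z h, h2 z h], by simp⟩

theorem s6_list_sum_neg (l : List E) : (l.map (fun z => -z)).sum = -l.sum := by
  induction l with
  | nil => simp
  | cons a l ih => simp [ih]; abel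

theorem s6PosL.neg {L : E →+ E} {x : E} (hx : s6PosL L x) : s6PosL L (-x) := by
  obtain ⟨l, h, rfl⟩ := hx
  refine ⟨l.map (fun z => -z), ?_, (s6_list_sum_neg l).symm⟩
  intro z hz
  obtain ⟨w, hw, rfl⟩ := List.mem_map.1 hz
  obtain ⟨n, hn, hLw⟩ := h w hw
  exact ⟨n, hn, by rw [map_neg, hLw, smul_neg]⟩

theorem s6PosL.single {L : E →+ E} {x : E} (n : ℕ) (hn : 1 ≤ n) (hx : L x = n • x) :
    s6PosL L x := ⟨[x], by intro z hz; rw [List.mem_singleton] at hz; subst hz; exact ⟨n, hn, hx⟩,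
      by simp⟩

theorem s6_list_sum_sub_map (L : E →+ E) (m : ℕ) (l : List E) :
    (l.map (fun w => L w - m • w)).sum = L l.sum - m • l.sum := by
  induction l with
  | nil => simp
  | cons a l ih => simp only [List.map_cons, List.sum_cons, map_add, smul_add, ih]; abel

end PosL

/-- Let `S` be a commutative ring containing `ℚ` and
`R = S[T]/(T^r)`, `r ≥ 1`, viewed as a graded `S`-algebra with `T` in degree `1`.
Then the canonical projection `Ω^•_{R/ℚ} → Ω^•_{S/ℚ}` of de Rham complexes
(killing `T`) is a quasi-isomorphism; in particular the cohomology of the relative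
complex vanishes.

Here `R` is any ring identified with `S[T]/(T^r)` by a ring isomorphism `eR`, and
`π : R → S` is the corresponding projection.  The de Rham complex of a `ℚ`-algebra
`A` is encoded as the exterior algebra `⋀_A Ω¹_{A/ℚ}` equipped with the (unique)
additive map `d` satisfying `d 1 = 0` and the Leibniz rules
`d(a·ω) = da ∧ ω + a·dω` and `d(da ∧ ω) = −da ∧ dω`; the projection `p` is the
(unique) additive map acting on generators via `π`.  Quasi-isomorphism is expressed
elementwise: `p` is surjective and injective on cohomology `ker d / im d`. -/
theorem stmt6 (S : Type) [CommRing S] [Algebra ℚ S] (r : ℕ) (hr : 1 ≤ r)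
    (R : Type) [CommRing R] [Algebra ℚ R] (eR : R ≃+* TruncPoly S r)
    (π : R →+* S) (hπ : π = (truncProj S r hr).comp (eR : R →+* TruncPoly S r))
    (dR : ExteriorAlgebra R (Ω[R⁄ℚ]) →+ ExteriorAlgebra R (Ω[R⁄ℚ]))
    (dS : ExteriorAlgebra S (Ω[S⁄ℚ]) →+ ExteriorAlgebra S (Ω[S⁄ℚ]))
    (p : ExteriorAlgebra R (Ω[R⁄ℚ]) →+ ExteriorAlgebra S (Ω[S⁄ℚ]))
    (hdR0 : dR 1 = 0)
    (hdR1 : ∀ (a : R) (ω : ExteriorAlgebra R (Ω[R⁄ℚ])),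
      dR (algebraMap R (ExteriorAlgebra R (Ω[R⁄ℚ])) a * ω) =
        ExteriorAlgebra.ι R (KaehlerDifferential.D ℚ R a) * ω +
          algebraMap R (ExteriorAlgebra R (Ω[R⁄ℚ])) a * dR ω)
    (hdR2 : ∀ (a : R) (ω : ExteriorAlgebra R (Ω[R⁄ℚ])),
      dR (ExteriorAlgebra.ι R (KaehlerDifferential.D ℚ R a) * ω) =
        -(ExteriorAlgebra.ι R (KaehlerDifferential.D ℚ R a) * dR ω))
    (hdS0 : dS 1 = 0)
    (hdS1 : ∀ (a : S) (ω : ExteriorAlgebra S (Ω[S⁄ℚ])),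
      dS (algebraMap S (ExteriorAlgebra S (Ω[S⁄ℚ])) a * ω) =
        ExteriorAlgebra.ι S (KaehlerDifferential.D ℚ S a) * ω +
          algebraMap S (ExteriorAlgebra S (Ω[S⁄ℚ])) a * dS ω)
    (hdS2 : ∀ (a : S) (ω : ExteriorAlgebra S (Ω[S⁄ℚ])),
      dS (ExteriorAlgebra.ι S (KaehlerDifferential.D ℚ S a) * ω) =
        -(ExteriorAlgebra.ι S (KaehlerDifferential.D ℚ S a) * dS ω))
    (hp0 : p 1 = 1)
    (hp1 : ∀ (a : R) (ω : ExteriorAlgebra R (Ω[R⁄ℚ])),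
      p (algebraMap R (ExteriorAlgebra R (Ω[R⁄ℚ])) a * ω) =
        algebraMap S (ExteriorAlgebra S (Ω[S⁄ℚ])) (π a) * p ω)
    (hp2 : ∀ (a : R) (ω : ExteriorAlgebra R (Ω[R⁄ℚ])),
      p (ExteriorAlgebra.ι R (KaehlerDifferential.D ℚ R a) * ω) =
        ExteriorAlgebra.ι S (KaehlerDifferential.D ℚ S (π a)) * p ω) :
    (∀ ω : ExteriorAlgebra S (Ω[S⁄ℚ]), dS ω = 0 →
      ∃ η : ExteriorAlgebra R (Ω[R⁄ℚ]), dR η = 0 ∧ ∃ ξ, p η - ω = dS ξ) ∧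
    (∀ η : ExteriorAlgebra R (Ω[R⁄ℚ]), dR η = 0 →
      (∃ ξ, p η = dS ξ) → ∃ ζ, η = dR ζ) := by
  subst hπ
  obtain ⟨hj1, hjalg, hjiota⟩ := s6j_spec hr eR
  set J := s6j hr eR with hJdef
  set cE := (s6cE hr eR).toAddMonoidHom with hcEdef
  have hcEa : ∀ (a : R) (x : ExteriorAlgebra R (Ω[R⁄ℚ])),
      cE (algebraMap R (ExteriorAlgebra R (Ω[R⁄ℚ])) a * x) =
        algebraMap R (ExteriorAlgebra R (Ω[R⁄ℚ])) a * cE x := fun a x =>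
    s6cE_alg_mul hr eR a x
  have hcEi : ∀ (a : R) (x : ExteriorAlgebra R (Ω[R⁄ℚ])),
      cE (ExteriorAlgebra.ι R (KaehlerDifferential.D ℚ R a) * x) =
        algebraMap R _ (s6E hr eR a) * x -
          ExteriorAlgebra.ι R (KaehlerDifferential.D ℚ R a) * cE x := fun a x =>
    s6cE_iota_mul hr eR a x
  have hcE1 : cE 1 = 0 := s6cE_one hr eR
  set L : ExteriorAlgebra R (Ω[R⁄ℚ]) →+ ExteriorAlgebra R (Ω[R⁄ℚ]) :=
    dR.comp cE + cE.comp dR with hLdef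
  have hLapp : ∀ x, L x = dR (cE x) + cE (dR x) := fun _ => rfl
  have hEsig : ∀ s : S, s6E hr eR (s6sig eR s) = 0 := s6E_sig hr eR
  have hπσ : ∀ s : S, (truncProj S r hr).comp (eR : R →+* TruncPoly S r) (s6sig eR s) = s :=
    s6_pi_sig hr eR
  have hπE : ∀ a : R, (truncProj S r hr).comp (eR : R →+* TruncPoly S r) (s6E hr eR a) = 0 :=
    s6_pi_E hr eR
  -- ℚ-linearity of dR
  have hdq : ∀ (q : ℚ) (x : ExteriorAlgebra R (Ω[R⁄ℚ])), dR (q • x) = q • dR x := by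
    intro q x
    have h1 : q • x = algebraMap R (ExteriorAlgebra R (Ω[R⁄ℚ])) (algebraMap ℚ R q) * x := by
      rw [← Algebra.smul_def, algebraMap_smul]
    have h2 : q • dR x = algebraMap R (ExteriorAlgebra R (Ω[R⁄ℚ])) (algebraMap ℚ R q) * dR x := by
      rw [← Algebra.smul_def, algebraMap_smul]
    rw [h1, h2, hdR1, Derivation.map_algebraMap, map_zero, zero_mul, zero_add]
  -- Leibniz rules for the Lie derivative L
  have hLalg : ∀ (a : R) (x : ExteriorAlgebra R (Ω[R⁄ℚ])),
      L (algebraMap R (ExteriorAlgebra R (Ω[R⁄ℚ])) a * x) =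
        algebraMap R (ExteriorAlgebra R (Ω[R⁄ℚ])) (s6E hr eR a) * x +
          algebraMap R (ExteriorAlgebra R (Ω[R⁄ℚ])) a * L x := by
    intro a x
    rw [hLapp, hLapp, hcEa, hdR1, hdR1, map_add, hcEi, hcEa, mul_add]
    abel
  have hLiota : ∀ (a : R) (x : ExteriorAlgebra R (Ω[R⁄ℚ])),
      L (ExteriorAlgebra.ι R (KaehlerDifferential.D ℚ R a) * x) =
        ExteriorAlgebra.ι R (KaehlerDifferential.D ℚ R (s6E hr eR a)) * x +
          ExteriorAlgebra.ι R (KaehlerDifferential.D ℚ R a) * L x := by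
    intro a x
    rw [hLapp, hLapp, hcEi, map_sub, hdR1, hdR2, hdR2, map_neg, hcEi, mul_add]
    abel
  -- d ∘ d = 0
  have hddw : ∀ w, S6Word w → dR (dR w) = 0 := by
    intro w hw
    induction hw with
    | one => rw [hdR0, map_zero]
    | algCons a w ih =>
      rw [hdR1, map_add, hdR2, hdR1, ih, mul_zero, add_zero, neg_add_cancel]
    | iotaCons a w ih =>
      rw [hdR2, map_neg, hdR2, ih, mul_zero, neg_zero, neg_zero]
  have hdd : ∀ x, dR (dR x) = 0 := by
    intro x
    simpa using s6_addHom_eq (dR.comp dR) 0 (by intro w h; simpa using hddw w h) x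
  -- p ∘ J = id
  have hpj : ∀ y, p (J y) = y := by
    have hw : ∀ w, S6Word w → p (J w) = w := by
      intro w hw
      induction hw with
      | one => rw [hj1, hp0]
      | algCons s w ih => rw [hjalg, hp1, hπσ, ih]
      | iotaCons s w ih => rw [hjiota, hp2, hπσ, ih]
    intro y
    simpa using s6_addHom_eq (p.comp J) (AddMonoidHom.id _) (by intro w h; simpa using hw w h) y
  -- dR ∘ J = J ∘ dS
  have hjd : ∀ y, dR (J y) = J (dS y) := by
    have hw : ∀ w, S6Word w → dR (J w) = J (dS w) := by
      intro w hw
      induction hw with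
      | one => rw [hj1, hdR0, hdS0, map_zero]
      | algCons s w ih => rw [hjalg, hdR1, hdS1, map_add, hjiota, hjalg, ih]
      | iotaCons s w ih => rw [hjiota, hdR2, hdS2, map_neg, hjiota, ih]
    intro y
    simpa using s6_addHom_eq (dR.comp J) (J.comp dS) (by intro w h; simpa using hw w h) y
  -- p ∘ dR = dS ∘ p
  have hpd : ∀ x, p (dR x) = dS (p x) := by
    have hw : ∀ w, S6Word w → p (dR w) = dS (p w) := by
      intro w hw
      induction hw with
      | one => rw [hdR0, map_zero, hp0, hdS0]
      | algCons a w ih => rw [hdR1, map_add, hp2, hp1, ih, hp1, hdS1]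
      | iotaCons a w ih => rw [hdR2, map_neg, hp2, ih, hp2, hdS2]
    intro x
    simpa using s6_addHom_eq (p.comp dR) (dS.comp p) (by intro w h; simpa using hw w h) x
  -- L ∘ J = 0
  have hLj : ∀ y, L (J y) = 0 := by
    have hw : ∀ w, S6Word w → L (J w) = 0 := by
      intro w hw
      induction hw with
      | one => rw [hj1, hLapp, hcE1, map_zero, hdR0, map_zero, add_zero]
      | algCons s w ih => rw [hjalg, hLalg, hEsig, map_zero, zero_mul, ih, mul_zero, add_zero]
      | iotaCons s w ih =>
        rw [hjiota, hLiota, hEsig, Derivation.map_zero, map_zero, zero_mul, ih, mul_zero,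
          add_zero]
    intro y
    simpa using s6_addHom_eq (L.comp J) 0 (by intro w h; simpa using hw w h) y
  -- eigenvector decomposition helpers
  have hSingAlg : ∀ b : R, s6REig hr eR b → ∀ u, L u = 0 →
      s6PosL L (algebraMap R (ExteriorAlgebra R (Ω[R⁄ℚ])) b * u) := by
    rintro b ⟨n, hn, hb⟩ u hu
    refine s6PosL.single n hn ?_
    rw [hLalg, hb, hu, mul_zero, add_zero, map_nsmul, smul_mul_assoc]
  have hSingIota : ∀ b : R, s6REig hr eR b → ∀ u, L u = 0 →
      s6PosL L (ExteriorAlgebra.ι R (KaehlerDifferential.D ℚ R b) * u) := by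
    rintro b ⟨n, hn, hb⟩ u hu
    refine s6PosL.single n hn ?_
    have hD : KaehlerDifferential.D ℚ R (n • b) = n • KaehlerDifferential.D ℚ R b :=
      map_nsmul (KaehlerDifferential.D ℚ R : R →+ Ω[R⁄ℚ]) n b
    rw [hLiota, hb, hu, mul_zero, add_zero, hD, map_nsmul, smul_mul_assoc]
  have hMalg0 : ∀ c : R, s6E hr eR c = 0 → ∀ x, s6PosL L x →
      s6PosL L (algebraMap R (ExteriorAlgebra R (Ω[R⁄ℚ])) c * x) := by
    rintro c hc x ⟨l, hl, rfl⟩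
    refine ⟨l.map (fun z => algebraMap R (ExteriorAlgebra R (Ω[R⁄ℚ])) c * z), ?_,
      s6_list_sum_mul_left _ _⟩
    intro z hz
    obtain ⟨w, hw, rfl⟩ := List.mem_map.1 hz
    obtain ⟨n, hn, hLw⟩ := hl w hw
    exact ⟨n, hn, by rw [hLalg, hc, map_zero, zero_mul, zero_add, hLw, mul_smul_comm]⟩
  have hMiota0 : ∀ c : R, s6E hr eR c = 0 → ∀ x, s6PosL L x →
      s6PosL L (ExteriorAlgebra.ι R (KaehlerDifferential.D ℚ R c) * x) := by
    rintro c hc x ⟨l, hl, rfl⟩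
    refine ⟨l.map (fun z => ExteriorAlgebra.ι R (KaehlerDifferential.D ℚ R c) * z), ?_,
      s6_list_sum_mul_left _ _⟩
    intro z hz
    obtain ⟨w, hw, rfl⟩ := List.mem_map.1 hz
    obtain ⟨n, hn, hLw⟩ := hl w hw
    refine ⟨n, hn, ?_⟩
    rw [hLiota, hc, Derivation.map_zero, map_zero, zero_mul, zero_add, hLw, mul_smul_comm]
  have hMalgE : ∀ b : R, s6REig hr eR b → ∀ x, s6PosL L x →
      s6PosL L (algebraMap R (ExteriorAlgebra R (Ω[R⁄ℚ])) b * x) := by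
    rintro b ⟨n, hn, hb⟩ x ⟨l, hl, rfl⟩
    refine ⟨l.map (fun z => algebraMap R (ExteriorAlgebra R (Ω[R⁄ℚ])) b * z), ?_,
      s6_list_sum_mul_left _ _⟩
    intro z hz
    obtain ⟨w, hw, rfl⟩ := List.mem_map.1 hz
    obtain ⟨m, hm, hLw⟩ := hl w hw
    refine ⟨n + m, le_trans hn (Nat.le_add_right n m), ?_⟩
    rw [hLalg, hb, hLw, map_nsmul, smul_mul_assoc, mul_smul_comm, add_nsmul]
  have hMiotaE : ∀ b : R, s6REig hr eR b → ∀ x, s6PosL L x →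
      s6PosL L (ExteriorAlgebra.ι R (KaehlerDifferential.D ℚ R b) * x) := by
    rintro b ⟨n, hn, hb⟩ x ⟨l, hl, rfl⟩
    refine ⟨l.map (fun z => ExteriorAlgebra.ι R (KaehlerDifferential.D ℚ R b) * z), ?_,
      s6_list_sum_mul_left _ _⟩
    intro z hz
    obtain ⟨w, hw, rfl⟩ := List.mem_map.1 hz
    obtain ⟨m, hm, hLw⟩ := hl w hw
    refine ⟨n + m, le_trans hn (Nat.le_add_right n m), ?_⟩
    have hD : KaehlerDifferential.D ℚ R (n • b) = n • KaehlerDifferential.D ℚ R b :=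
      map_nsmul (KaehlerDifferential.D ℚ R : R →+ Ω[R⁄ℚ]) n b
    rw [hLiota, hb, hLw, hD, map_nsmul, smul_mul_assoc, mul_smul_comm, add_nsmul]
  have hMsumAlg : ∀ la : List R, (∀ b ∈ la, s6REig hr eR b) →
      ∀ w, s6PosL L (w - J (p w)) →
      s6PosL L (algebraMap R (ExteriorAlgebra R (Ω[R⁄ℚ])) la.sum * w) := by
    intro la
    induction la with
    | nil => intro _ w _; rw [List.sum_nil, map_zero, zero_mul]; exact s6PosL.zero L
    | cons b t ih =>
      intro hla w hw
      rw [List.sum_cons, map_add, add_mul]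
      refine s6PosL.add ?_ (ih (fun c hc => hla c (by simp [hc])) w hw)
      have h2 : J (p w) + (w - J (p w)) = w := by abel
      have h3 : algebraMap R (ExteriorAlgebra R (Ω[R⁄ℚ])) b * w =
          algebraMap R (ExteriorAlgebra R (Ω[R⁄ℚ])) b * J (p w) +
            algebraMap R (ExteriorAlgebra R (Ω[R⁄ℚ])) b * (w - J (p w)) := by
        rw [← mul_add, h2]
      rw [h3]
      exact s6PosL.add (hSingAlg b (hla b (by simp)) _ (hLj _))
        (hMalgE b (hla b (by simp)) _ hw)
  have hMsumIota : ∀ la : List R, (∀ b ∈ la, s6REig hr eR b) →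
      ∀ w, s6PosL L (w - J (p w)) →
      s6PosL L (ExteriorAlgebra.ι R (KaehlerDifferential.D ℚ R la.sum) * w) := by
    intro la
    induction la with
    | nil =>
      intro _ w _
      rw [List.sum_nil, Derivation.map_zero, map_zero, zero_mul]
      exact s6PosL.zero L
    | cons b t ih =>
      intro hla w hw
      rw [List.sum_cons, map_add, map_add, add_mul]
      refine s6PosL.add ?_ (ih (fun c hc => hla c (by simp [hc])) w hw)
      have h2 : J (p w) + (w - J (p w)) = w := by abel
      have h3 : ExteriorAlgebra.ι R (KaehlerDifferential.D ℚ R b) * w =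
          ExteriorAlgebra.ι R (KaehlerDifferential.D ℚ R b) * J (p w) +
            ExteriorAlgebra.ι R (KaehlerDifferential.D ℚ R b) * (w - J (p w)) := by
        rw [← mul_add, h2]
      rw [h3]
      exact s6PosL.add (hSingIota b (hla b (by simp)) _ (hLj _))
        (hMiotaE b (hla b (by simp)) _ hw)
  -- the decomposition
  have hdecw : ∀ w, S6Word w → s6PosL L (w - J (p w)) := by
    intro w hw
    induction hw with
    | one => rw [hp0, hj1, sub_self]; exact s6PosL.zero L
    | @algCons a w hword ih =>
      obtain ⟨la, hla, hdeca⟩ := s6RDec hr eR a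
      have hsum : la.sum = a - s6sig eR (((truncProj S r hr).comp
          (eR : R →+* TruncPoly S r)) a) := eq_sub_of_add_eq' hdeca.symm
      have hjp : J (p (algebraMap R (ExteriorAlgebra R (Ω[R⁄ℚ])) a * w)) =
          algebraMap R (ExteriorAlgebra R (Ω[R⁄ℚ]))
            (s6sig eR (((truncProj S r hr).comp (eR : R →+* TruncPoly S r)) a)) * J (p w) := by
        rw [hp1, hjalg]
      have hid : algebraMap R (ExteriorAlgebra R (Ω[R⁄ℚ])) a * w -
            J (p (algebraMap R (ExteriorAlgebra R (Ω[R⁄ℚ])) a * w)) =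
          algebraMap R (ExteriorAlgebra R (Ω[R⁄ℚ]))
              (s6sig eR (((truncProj S r hr).comp (eR : R →+* TruncPoly S r)) a)) *
              (w - J (p w)) +
            algebraMap R (ExteriorAlgebra R (Ω[R⁄ℚ]))
              (a - s6sig eR (((truncProj S r hr).comp (eR : R →+* TruncPoly S r)) a)) * w := by
        rw [hjp, map_sub, mul_sub, sub_mul]
        abel
      rw [hid, ← hsum]
      exact s6PosL.add (hMalg0 _ (hEsig _) _ ih) (hMsumAlg la hla w ih)
    | @iotaCons a w hword ih =>
      obtain ⟨la, hla, hdeca⟩ := s6RDec hr eR a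
      have hsum : la.sum = a - s6sig eR (((truncProj S r hr).comp
          (eR : R →+* TruncPoly S r)) a) := eq_sub_of_add_eq' hdeca.symm
      have hjp : J (p (ExteriorAlgebra.ι R (KaehlerDifferential.D ℚ R a) * w)) =
          ExteriorAlgebra.ι R (KaehlerDifferential.D ℚ R
            (s6sig eR (((truncProj S r hr).comp (eR : R →+* TruncPoly S r)) a))) * J (p w) := by
        rw [hp2, hjiota]
      have hid : ExteriorAlgebra.ι R (KaehlerDifferential.D ℚ R a) * w -
            J (p (ExteriorAlgebra.ι R (KaehlerDifferential.D ℚ R a) * w)) =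
          ExteriorAlgebra.ι R (KaehlerDifferential.D ℚ R
              (s6sig eR (((truncProj S r hr).comp (eR : R →+* TruncPoly S r)) a))) *
              (w - J (p w)) +
            ExteriorAlgebra.ι R (KaehlerDifferential.D ℚ R
              (a - s6sig eR (((truncProj S r hr).comp (eR : R →+* TruncPoly S r)) a))) * w := by
        rw [hjp, map_sub, map_sub, sub_mul, mul_sub]
        abel
      rw [hid, ← hsum]
      exact s6PosL.add (hMiota0 _ (hEsig _) _ ih) (hMsumIota la hla w ih)
  have hdec : ∀ x, s6PosL L (x - J (p x)) := by
    intro x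
    obtain ⟨l, hl, rfl⟩ := S6Span.top x
    induction l with
    | nil => rw [List.sum_nil, map_zero, map_zero, sub_zero]; exact s6PosL.zero L
    | cons z t ih =>
      have h1 : (z :: t).sum - J (p (z :: t).sum) =
          (z - J (p z)) + (t.sum - J (p t.sum)) := by
        rw [List.sum_cons, map_add, map_add]; abel
      rw [h1]
      refine s6PosL.add ?_ (ih (fun u hu => hl u (by simp [hu])))
      rcases hl z (by simp) with h | h
      · exact hdecw z h
      · have hneg := hdecw _ h
        have h2 : z - J (p z) = -(-z - J (p (-z))) := by rw [map_neg, map_neg]; abel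
        rw [h2]
        exact hneg.neg
  -- extraction of a primitive from a positive eigen-sum
  have hkey : ∀ (n : ℕ) (l : List (ExteriorAlgebra R (Ω[R⁄ℚ]))), l.length = n →
      (∀ z ∈ l, ∃ k, 1 ≤ k ∧ L z = k • z) → dR l.sum = 0 → ∃ ζ, l.sum = dR ζ := by
    intro n
    induction n with
    | zero =>
      intro l hlen _ _
      refine ⟨0, ?_⟩
      rw [List.length_eq_zero_iff.mp hlen, List.sum_nil, map_zero]
    | succ n ih =>
      intro l hlen hl hsum
      obtain ⟨z, t, rfl⟩ : ∃ z t, l = z :: t := by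
        cases l with
        | nil => simp at hlen
        | cons a b => exact ⟨a, b, rfl⟩
      obtain ⟨m, hm, hz⟩ := hl z (by simp)
      have hsum' : (t.map (fun w => L w - m • w)).sum =
          L (z :: t).sum - m • (z :: t).sum := by
        rw [s6_list_sum_sub_map]
        have ht : t.sum = (z :: t).sum - z := by rw [List.sum_cons]; abel
        rw [ht, map_sub, smul_sub, hz]
        abel
      have heig' : ∀ w' ∈ t.map (fun w => L w - m • w), ∃ k, 1 ≤ k ∧ L w' = k • w' := by
        intro w' hw'
        obtain ⟨w, hw, rfl⟩ := List.mem_map.1 hw'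
        obtain ⟨k, hk, hLw⟩ := hl w (by simp [hw])
        refine ⟨k, hk, ?_⟩
        rw [map_sub, map_nsmul, hLw, smul_sub]
        rw [smul_comm m k, map_nsmul, hLw]
      have hclosed' : dR (t.map (fun w => L w - m • w)).sum = 0 := by
        rw [hsum', map_sub, map_nsmul, hsum, smul_zero, sub_zero, hLapp, map_add, hsum,
          map_zero, map_zero, add_zero]
        exact hdd _
      obtain ⟨ζ', hζ'⟩ := ih (t.map (fun w => L w - m • w))
        (by rw [List.length_map]; simpa using hlen) heig' hclosed'
      have hLx : L (z :: t).sum = dR (cE (z :: t).sum) := by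
        rw [hLapp, hsum, map_zero, add_zero]
      have hmx : m • (z :: t).sum = dR (cE (z :: t).sum - ζ') := by
        rw [map_sub, ← hLx, ← hζ', hsum']
        abel
      refine ⟨(m : ℚ)⁻¹ • (cE (z :: t).sum - ζ'), ?_⟩
      have hm0 : ((m : ℚ)) ≠ 0 := by exact_mod_cast Nat.one_le_iff_ne_zero.mp hm
      have hns : ((m : ℚ)) • (z :: t).sum = m • (z :: t).sum :=
        Nat.cast_smul_eq_nsmul ℚ m ((z :: t).sum)
      calc (z :: t).sum = (m : ℚ)⁻¹ • ((m : ℚ) • (z :: t).sum) := (inv_smul_smul₀ hm0 _).symm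
        _ = (m : ℚ)⁻¹ • (m • (z :: t).sum) := by rw [hns]
        _ = (m : ℚ)⁻¹ • dR (cE (z :: t).sum - ζ') := by rw [hmx]
        _ = dR ((m : ℚ)⁻¹ • (cE (z :: t).sum - ζ')) := (hdq _ _).symm
  constructor
  · intro ω hω
    exact ⟨J ω, by rw [hjd, hω, map_zero], 0, by rw [hpj, sub_self, map_zero]⟩
  · rintro η hη ⟨ξ, hξ⟩
    have hdx : dR (η - dR (J ξ)) = 0 := by rw [map_sub, hη, hdd, sub_zero]
    have hpx : p (η - dR (J ξ)) = 0 := by rw [map_sub, hpd, hpj, hξ, sub_self]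
    have hx : s6PosL L (η - dR (J ξ)) := by
      have h := hdec (η - dR (J ξ))
      rwa [hpx, map_zero, sub_zero] at h
    obtain ⟨l, hl, hxl⟩ := hx
    obtain ⟨ζ0, hζ0⟩ := hkey l.length l rfl hl (by rw [← hxl]; exact hdx)
    refine ⟨ζ0 + J ξ, ?_⟩
    rw [map_add, ← hζ0, ← hxl]
    abel
end

section
/- Let S be a commutative ring containing ℚ and R = S[[T]] the power series ring. Then the de Rham differential d : T·R/T^2·R → Ω^1_{R/ℚ} ⊗_R (R/TR) is injective. -/
open scoped TensorProduct

set_option maxHeartbeats 1000000 in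
/-- Let `S` be a commutative ring containing `ℚ` and `R = S[[T]]`.
Then the de Rham differential `d : T·R/T²·R → Ω¹_{R/ℚ} ⊗_R R/TR` is injective;
elementwise: if `x ∈ TR` and `dx ⊗ 1 = 0` in `Ω¹_{R/ℚ} ⊗_R R/TR`, then `x ∈ T²R`. -/
theorem stmt7 (S : Type*) [CommRing S] [Algebra ℚ S] :
    ∀ x ∈ Ideal.span {(PowerSeries.X : PowerSeries S)},
      (KaehlerDifferential.D ℚ (PowerSeries S) x) ⊗ₜ[PowerSeries S]
          (1 : PowerSeries S ⧸ Ideal.span {(PowerSeries.X : PowerSeries S)}) =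
        (0 : Ω[PowerSeries S⁄ℚ] ⊗[PowerSeries S]
          (PowerSeries S ⧸ Ideal.span {(PowerSeries.X : PowerSeries S)})) →
      x ∈ Ideal.span {(PowerSeries.X : PowerSeries S) ^ 2} := by
  intro x hx h0
  let R := PowerSeries S
  let I : Ideal R := Ideal.span {(PowerSeries.X : R)}
  let Q := R ⧸ I
  -- the derivation d/dT followed by the quotient map
  let D : Derivation ℚ R Q :=
    (Ideal.Quotient.mkₐ R I).toLinearMap.compDer
      ((PowerSeries.derivative S).restrictScalars ℚ)
  -- induced map Ω¹ ⊗ Q → Q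
  let φ : Ω[R⁄ℚ] →ₗ[R] Q := D.liftKaehlerDifferential
  let ψ : Ω[R⁄ℚ] ⊗[R] Q →ₗ[R] Q :=
    TensorProduct.lift ((LinearMap.mul R Q).comp φ)
  have hψ : ψ ((KaehlerDifferential.D ℚ R x) ⊗ₜ[R] (1 : Q)) = 0 := by
    rw [h0, map_zero]
  have hDx : D x = 0 := by
    have h1 : ψ ((KaehlerDifferential.D ℚ R x) ⊗ₜ[R] (1 : Q))
        = φ (KaehlerDifferential.D ℚ R x) * 1 := rfl
    rw [h1, mul_one, Derivation.liftKaehlerDifferential_comp_D] at hψ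
    exact hψ
  -- translate: derivative x ∈ I
  have hderiv : (PowerSeries.derivative S) x ∈ I := by
    have h2 : Ideal.Quotient.mk I ((PowerSeries.derivative S) x) = 0 := hDx
    rwa [Ideal.Quotient.eq_zero_iff_mem] at h2
  rw [Ideal.mem_span_singleton] at hx hderiv ⊢
  rw [PowerSeries.X_pow_dvd_iff]
  rw [PowerSeries.X_dvd_iff, ← PowerSeries.coeff_zero_eq_constantCoeff_apply] at hx hderiv
  intro m hm
  interval_cases m
  · exact hx
  · rw [PowerSeries.coeff_derivative] at hderiv
    simpa using hderiv
end

section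
/- Let R be a commutative ring, f ∈ R a non-zero-divisor, and suppose the de Rham differential d : fR/f^2R → Ω^1_{R/ℚ} ⊗_R R/fR is injective, where R contains ℚ. Then for every i ≥ 1, the de Rham differential d : f^iR/f^{i+1}R → Ω^1_{R/ℚ} ⊗_R f^{i-1}R/f^iR is injective. -/
open scoped TensorProduct

/-- Let `R` be a commutative `ℚ`-algebra, `f` a non-zero-divisor, and
suppose `d : fR/f²R → Ω¹_{R/ℚ} ⊗_R R/fR` is injective.  Then for every `i ≥ 1`, the de
Rham differential `d : fⁱR/fⁱ⁺¹R → Ω¹_{R/ℚ} ⊗_R fⁱ⁻¹R/fⁱR` is injective.  Here we use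
the identification `fⁱ⁻¹R/fⁱR ≅ R/fR` given by division by `fⁱ⁻¹` (`f` is a
non-zero-divisor), under which `d` sends the class of `fⁱ·a` to
`(i·a·df + f·da) ⊗ 1 ∈ Ω¹_{R/ℚ} ⊗_R R/fR`. -/
theorem stmt9 (R : Type*) [CommRing R] [Algebra ℚ R] (f : R)
    (hf : f ∈ nonZeroDivisors R)
    (hinj : ∀ x ∈ Ideal.span {f},
      (KaehlerDifferential.D ℚ R x) ⊗ₜ[R] (1 : R ⧸ Ideal.span {f}) =
        (0 : Ω[R⁄ℚ] ⊗[R] (R ⧸ Ideal.span {f})) → x ∈ Ideal.span {f ^ 2}) :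
    ∀ i : ℕ, 1 ≤ i → ∀ a : R,
      (((i : R) * a) • KaehlerDifferential.D ℚ R f + f • KaehlerDifferential.D ℚ R a)
          ⊗ₜ[R] (1 : R ⧸ Ideal.span {f}) =
        (0 : Ω[R⁄ℚ] ⊗[R] (R ⧸ Ideal.span {f})) →
      f ^ i * a ∈ Ideal.span {f ^ (i + 1)} := by
  intro i hi a h
  have hfz : ∀ ω : Ω[R⁄ℚ], (f • ω) ⊗ₜ[R] (1 : R ⧸ Ideal.span {f}) =
      (0 : Ω[R⁄ℚ] ⊗[R] (R ⧸ Ideal.span {f})) := by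
    intro ω
    rw [TensorProduct.smul_tmul]
    have : f • (1 : R ⧸ Ideal.span {f}) = 0 := by
      rw [← Algebra.algebraMap_eq_smul_one, Ideal.Quotient.algebraMap_eq,
        Ideal.Quotient.eq_zero_iff_mem]
      exact Ideal.mem_span_singleton_self f
    rw [this, TensorProduct.tmul_zero]
  rw [TensorProduct.add_tmul, hfz, add_zero] at h
  have hu : IsUnit ((i : R)) := by
    have hne : (i : ℚ) ≠ 0 := Nat.cast_ne_zero.2 (by omega)
    have : (i : R) = algebraMap ℚ R (i : ℚ) := by simp
    rw [this]
    exact IsUnit.map (algebraMap ℚ R) (isUnit_iff_ne_zero.2 hne)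
  have h2 : (a • KaehlerDifferential.D ℚ R f) ⊗ₜ[R] (1 : R ⧸ Ideal.span {f}) =
      (0 : Ω[R⁄ℚ] ⊗[R] (R ⧸ Ideal.span {f})) := by
    have key : (i : R) • ((a • KaehlerDifferential.D ℚ R f) ⊗ₜ[R]
        (1 : R ⧸ Ideal.span {f})) = 0 := by
      rw [TensorProduct.smul_tmul', smul_smul]
      exact h
    exact hu.smul_eq_zero.1 key
  have hfa : f * a ∈ Ideal.span {f ^ 2} := by
    apply hinj (f * a) (Ideal.mem_span_singleton.2 ⟨a, rfl⟩)
    rw [Derivation.leibniz, TensorProduct.add_tmul, h2, hfz, add_zero]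
  obtain ⟨r, hr⟩ := Ideal.mem_span_singleton.1 hfa
  refine Ideal.mem_span_singleton.2 ⟨r, ?_⟩
  have h1 : f ^ i * a = f ^ (i - 1) * (f * a) := by
    rw [← mul_assoc, ← pow_succ, Nat.sub_add_cancel hi]
  rw [h1, hr, ← mul_assoc, ← pow_add]
  congr 2
  omega
end
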